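/- arXiv:2108.13417 — 3 statements merged into one kernel-verified Lean document; each statement's English description precedes it below -/
import Mathlib

section
/- Let G be a connected simple graph on a finite vertex set V and let φ be a permutation voltage assignment in S_k on G. If the derived graph G^φ has exactly k connected components, then each connected component of G^φ (as an induced subgraph of G^φ) is isomorphic to G. -/
open SimpleGraph

/-- A permutation voltage assignment `φ` in `S_k` on a simple graph `G` assigns a permutation
to each ordered pair of adjacent vertices, with reversed pairs receiving inverse permutations. -/
def VoltageCompat {V : Type*} {k : ℕ} (G : SimpleGraph V) (φ : V → V → Equiv.Perm (Fin k)) :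
    Prop :=
  ∀ u v : V, G.Adj u v → φ v u = (φ u v)⁻¹

/-- The derived graph `G^φ` on `V × {1,…,k}`: `(u,i)` is adjacent to `(v,j)` iff
`u` is adjacent to `v` in `G` and `i = φ(u,v)(j)`. -/
def derivedGraph {V : Type*} {k : ℕ} (G : SimpleGraph V) (φ : V → V → Equiv.Perm (Fin k)) :
    SimpleGraph (V × Fin k) :=
  SimpleGraph.fromRel (fun p q => G.Adj p.1 q.1 ∧ p.2 = φ p.1 q.1 q.2)

/-- The voltage `φ(W) = φ(v₀,v₁)φ(v₁,v₂)⋯φ(v_{t−1},v_t)` of a walk `W = v₀v₁⋯v_t`. -/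
def walkVoltage {V : Type*} {k : ℕ} {G : SimpleGraph V}
    (φ : V → V → Equiv.Perm (Fin k)) {u v : V} (W : G.Walk u v) : Equiv.Perm (Fin k) :=
  (W.darts.map (fun d => φ d.fst d.snd)).prod

lemma derived_adj_of {V : Type*} {k : ℕ} {G : SimpleGraph V}
    {φ : V → V → Equiv.Perm (Fin k)} {u v : V} (h : G.Adj u v) (j : Fin k) :
    (derivedGraph G φ).Adj (u, φ u v j) (v, j) := by
  refine ⟨fun hh => h.ne (congrArg Prod.fst hh), Or.inl ⟨h, rfl⟩⟩

lemma adj_of_derived {V : Type*} {k : ℕ} {G : SimpleGraph V}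
    {φ : V → V → Equiv.Perm (Fin k)} (hφ : VoltageCompat G φ) {p q : V × Fin k}
    (h : (derivedGraph G φ).Adj p q) : G.Adj p.1 q.1 ∧ p.2 = φ p.1 q.1 q.2 := by
  rcases h with ⟨hne, h | h⟩
  · exact h
  · refine ⟨h.1.symm, ?_⟩
    rw [h.2, hφ _ _ h.1]
    simp

lemma reach_lift {V : Type*} {k : ℕ} {G : SimpleGraph V} {φ : V → V → Equiv.Perm (Fin k)}
    {u v : V} (W : G.Walk u v) (j : Fin k) :
    (derivedGraph G φ).Reachable (u, walkVoltage φ W j) (v, j) := by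
  induction W with
  | nil =>
    simp only [walkVoltage, SimpleGraph.Walk.darts_nil, List.map_nil, List.prod_nil,
      Equiv.Perm.coe_one, id_eq]
    exact SimpleGraph.Reachable.refl _
  | @cons a b c h W ih =>
    have hv : walkVoltage φ (SimpleGraph.Walk.cons h W) = φ a b * walkVoltage φ W := by
      simp [walkVoltage]
    rw [hv, Equiv.Perm.mul_apply]
    exact (derived_adj_of h (walkVoltage φ W j)).reachable.trans (ih)

theorem stmt_2 {V : Type*} [Fintype V] {k : ℕ} (hk : 0 < k)
    (G : SimpleGraph V) (hG : G.Connected)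
    (φ : V → V → Equiv.Perm (Fin k)) (hφ : VoltageCompat G φ)
    (hcomp : Nat.card (derivedGraph G φ).ConnectedComponent = k) :
    ∀ C : (derivedGraph G φ).ConnectedComponent,
      Nonempty (((derivedGraph G φ).induce C.supp) ≃g G) := by
  intro C
  classical
  -- for each v, the map i ↦ component of (v, i) is bijective
  have hbij : ∀ v : V, Function.Bijective
      (fun i : Fin k => (derivedGraph G φ).connectedComponentMk (v, i)) := by
    intro v
    have hsurj : Function.Surjective
        (fun i : Fin k => (derivedGraph G φ).connectedComponentMk (v, i)) := by
      intro D
      obtain ⟨⟨w, j⟩, rfl⟩ := D.exists_rep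
      obtain ⟨W⟩ := hG v w
      exact ⟨walkVoltage φ W j, ConnectedComponent.sound (reach_lift W j)⟩
    rw [Nat.bijective_iff_surjective_and_card]
    refine ⟨hsurj, ?_⟩
    simp only [Nat.card_eq_fintype_card] at hcomp ⊢
    simp [hcomp]
  -- unique fiber element for each v in C
  have huniq : ∀ v : V, ∀ i j : Fin k,
      (derivedGraph G φ).connectedComponentMk (v, i) = C →
      (derivedGraph G φ).connectedComponentMk (v, j) = C → i = j := by
    intro v i j hi hj
    exact (hbij v).injective (hi.trans hj.symm)
  have hex : ∀ v : V, ∃ i : Fin k, (derivedGraph G φ).connectedComponentMk (v, i) = C :=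
    fun v => (hbij v).surjective C
  choose h hh using hex
  -- the equivalence
  have hmem : ∀ v : V, ((v, h v) : V × Fin k) ∈ C.supp := by
    intro v
    exact hh v
  have hsnd : ∀ p : V × Fin k, p ∈ C.supp → p.2 = h p.1 := by
    intro p hp
    exact huniq p.1 p.2 (h p.1) hp (hh p.1)
  refine ⟨⟨⟨fun p => (p : V × Fin k).1, fun v => ⟨(v, h v), hmem v⟩, ?_, ?_⟩, ?_⟩⟩
  · intro ⟨p, hp⟩
    simp only [Subtype.mk.injEq]
    exact Prod.ext rfl (hsnd p hp).symm
  · intro v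
    rfl
  · intro ⟨p, hp⟩ ⟨q, hq⟩
    simp only [SimpleGraph.comap_adj, Function.Embedding.coe_subtype, Equiv.coe_fn_mk]
    constructor
    · intro hadj
      have hp2 : p.2 = h p.1 := hsnd p hp
      have hq2 : q.2 = h q.1 := hsnd q hq
      have hadj' := derived_adj_of (φ := φ) hadj q.2
      -- (p.1, φ p.1 q.1 q.2) adj (q.1, q.2), and (q.1,q.2) ∈ C
      have hqm : (derivedGraph G φ).connectedComponentMk (q.1, q.2) = C := by
        simpa using hq
      have hpm : (derivedGraph G φ).connectedComponentMk (p.1, φ p.1 q.1 q.2) = C := by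
        rw [← hqm]
        exact ConnectedComponent.sound hadj'.reachable
      have : φ p.1 q.1 q.2 = h p.1 := huniq p.1 _ _ hpm (hh p.1)
      have hp2' : p.2 = φ p.1 q.1 q.2 := by rw [this, hp2]
      have : p = (p.1, φ p.1 q.1 q.2) := Prod.ext rfl hp2'
      rw [this]
      exact hadj'
    · intro hadj
      exact (adj_of_derived hφ hadj).1
end

section
/- Let H be a connected m-uniform hypergraph on a finite vertex set V with edge set E, and let φ be a permutation voltage assignment in S_k on the incidence graph B_H. Then the derived hypergraph H_B^φ is connected if and only if there exists a vertex v of B_H such that for every pair i, j ∈ {1,…,k}, the graph B_H contains a closed walk W starting at v with i = φ(W)(j). -/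
open SimpleGraph Finset

/-- The "adjacency" simple graph of a hypergraph with edge set `E`: two distinct vertices
are adjacent iff they lie in a common edge.  The hypergraph is connected iff this graph is. -/
def hypAdj {V : Type*} (E : Finset (Finset V)) : SimpleGraph V :=
  SimpleGraph.fromRel (fun u v => ∃ e ∈ E, u ∈ e ∧ v ∈ e)

/-- The edge set of the derived hypergraph `H_B^φ` of a hypergraph with edge set `E` and a
permutation voltage assignment `φ` in `S_k` on the incidence graph: for `e ∈ E` and
`j ∈ {1,…,k}`, the edge `(e,j)` is the set `{(u, φ(u,e)(j)) : u ∈ e}`. -/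
def derivedEdges {V : Type*} [DecidableEq V] {k : ℕ}
    (E : Finset (Finset V)) (φ : V → Finset V → Equiv.Perm (Fin k)) :
    Finset (Finset (V × Fin k)) :=
  (E ×ˢ (Finset.univ : Finset (Fin k))).image
    (fun p => p.1.image (fun u => (u, φ u p.1 p.2)))

/-- The incidence graph `B_H`: bipartite graph on `V ⊔ E` where `v` and `e` are adjacent
iff `v ∈ e`. -/
def incGraph {V : Type*} (E : Finset (Finset V)) : SimpleGraph (V ⊕ {e // e ∈ E}) :=
  SimpleGraph.fromRel (fun a b =>
    ∃ (v : V) (e : {e // e ∈ E}), a = Sum.inl v ∧ b = Sum.inr e ∧ v ∈ e.1)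

/-- The voltages on ordered pairs of vertices of the incidence graph determined by a
permutation voltage assignment `φ` on incident pairs `(v,e)`, with `φ(e,v) = φ(v,e)⁻¹`. -/
def incVolt {V : Type*} {k : ℕ} (E : Finset (Finset V))
    (φ : V → Finset V → Equiv.Perm (Fin k)) :
    (V ⊕ {e // e ∈ E}) → (V ⊕ {e // e ∈ E}) → Equiv.Perm (Fin k)
  | Sum.inl v, Sum.inr e => φ v e.1
  | Sum.inr e, Sum.inl v => (φ v e.1)⁻¹
  | _, _ => 1

section Aux

variable {V : Type*} [DecidableEq V] {k : ℕ} {E : Finset (Finset V)}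

lemma walkVoltage_nil {W : Type*} {G : SimpleGraph W} (ψ : W → W → Equiv.Perm (Fin k)) (u : W) :
    walkVoltage ψ (SimpleGraph.Walk.nil : G.Walk u u) = 1 := rfl

lemma walkVoltage_cons {W : Type*} {G : SimpleGraph W} (ψ : W → W → Equiv.Perm (Fin k))
    {u v w : W} (h : G.Adj u v) (p : G.Walk v w) :
    walkVoltage ψ (SimpleGraph.Walk.cons h p) = ψ u v * walkVoltage ψ p := by
  simp [walkVoltage]

lemma walkVoltage_append {W : Type*} {G : SimpleGraph W} (ψ : W → W → Equiv.Perm (Fin k))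
    {u v w : W} (p : G.Walk u v) (q : G.Walk v w) :
    walkVoltage ψ (p.append q) = walkVoltage ψ p * walkVoltage ψ q := by
  simp [walkVoltage, SimpleGraph.Walk.darts_append]

omit [DecidableEq V] in
lemma incAdj {v : V} {e : {e // e ∈ E}} (h : v ∈ e.1) :
    (incGraph E).Adj (Sum.inl v) (Sum.inr e) := by
  rw [incGraph, SimpleGraph.fromRel_adj]
  exact ⟨by simp, Or.inl ⟨v, e, rfl, rfl, h⟩⟩

omit [DecidableEq V] in
lemma incGraph_adj {a b : V ⊕ {e // e ∈ E}} (h : (incGraph E).Adj a b) :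
    (∃ (v : V) (e : {e // e ∈ E}), a = Sum.inl v ∧ b = Sum.inr e ∧ v ∈ e.1) ∨
    (∃ (v : V) (e : {e // e ∈ E}), b = Sum.inl v ∧ a = Sum.inr e ∧ v ∈ e.1) := by
  rw [incGraph, SimpleGraph.fromRel_adj] at h
  exact h.2

lemma mem_derivedEdges (φ : V → Finset V → Equiv.Perm (Fin k)) (e : Finset V) (he : e ∈ E)
    (t : Fin k) : e.image (fun x => (x, φ x e t)) ∈ derivedEdges E φ :=
  Finset.mem_image.mpr ⟨(e, t), Finset.mem_product.mpr ⟨he, Finset.mem_univ _⟩, rfl⟩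

lemma derivedReach (φ : V → Finset V → Equiv.Perm (Fin k)) {e : Finset V} (he : e ∈ E)
    {u w : V} (hu : u ∈ e) (hw : w ∈ e) (t : Fin k) :
    (hypAdj (derivedEdges E φ)).Reachable (u, φ u e t) (w, φ w e t) := by
  by_cases h : (u, φ u e t) = (w, φ w e t)
  · rw [h]
  · refine SimpleGraph.Adj.reachable ?_
    rw [hypAdj, SimpleGraph.fromRel_adj]
    exact ⟨h, Or.inl ⟨e.image (fun x => (x, φ x e t)), mem_derivedEdges φ e he t,
      Finset.mem_image.mpr ⟨u, hu, rfl⟩, Finset.mem_image.mpr ⟨w, hw, rfl⟩⟩⟩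

/-- Relation between a vertex of the incidence graph at a given sheet and a derived vertex. -/
def liftP (φ : V → Finset V → Equiv.Perm (Fin k)) :
    (V ⊕ {e // e ∈ E}) → Fin k → (V × Fin k) → Prop
  | Sum.inl u, i, x => x = (u, i)
  | Sum.inr e, i, x => ∃ u, u ∈ e.1 ∧ x = (u, φ u e.1 i)

lemma lift_walk (φ : V → Finset V → Equiv.Perm (Fin k)) {a b : V ⊕ {e // e ∈ E}}
    (W : (incGraph E).Walk a b) :
    ∀ (j : Fin k) (x y : V × Fin k), liftP φ a (walkVoltage (incVolt E φ) W j) x →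
      liftP φ b j y → (hypAdj (derivedEdges E φ)).Reachable x y := by
  induction W with
  | nil =>
    rename_i c
    intro j x y hx hy
    rw [walkVoltage_nil] at hx
    simp only [Equiv.Perm.one_apply] at hx
    cases c with
    | inl u =>
      simp only [liftP] at hx hy
      rw [hx, hy]
    | inr e =>
      obtain ⟨u, hu, rfl⟩ := hx
      obtain ⟨w, hw, rfl⟩ := hy
      exact derivedReach φ e.2 hu hw j
  | cons h p ih =>
    intro j x y hx hy
    rw [walkVoltage_cons] at hx
    rcases incGraph_adj h with ⟨v, e, ha, hc, hve⟩ | ⟨v, e, hc, ha, hve⟩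
    · subst ha; subst hc
      simp only [liftP, incVolt, Equiv.Perm.mul_apply] at hx
      exact ih j x y ⟨v, hve, hx⟩ hy
    · subst ha; subst hc
      simp only [liftP, incVolt, Equiv.Perm.mul_apply] at hx
      obtain ⟨w, hw, rfl⟩ := hx
      refine Reachable.trans ?_ (ih j (v, walkVoltage (incVolt E φ) p j) y rfl hy)
      have : (v, walkVoltage (incVolt E φ) p j) =
          (v, φ v e.1 ((φ v e.1)⁻¹ (walkVoltage (incVolt E φ) p j))) := by simp
      rw [this]
      exact derivedReach φ e.2 hw hve _
  
lemma reach_to_walk (φ : V → Finset V → Equiv.Perm (Fin k)) {p q : V × Fin k}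
    (h : (hypAdj (derivedEdges E φ)).Reachable p q) :
    ∃ W : (incGraph E).Walk (Sum.inl p.1) (Sum.inl q.1),
      p.2 = walkVoltage (incVolt E φ) W q.2 := by
  obtain ⟨W⟩ := h
  induction W with
  | nil => exact ⟨SimpleGraph.Walk.nil, rfl⟩
  | cons h w ih =>
    rename_i x c q'
    obtain ⟨W', hW'⟩ := ih
    rw [hypAdj, SimpleGraph.fromRel_adj] at h
    obtain ⟨hne, hrel⟩ := h
    have hrel' : ∃ de ∈ derivedEdges E φ, x ∈ de ∧ c ∈ de := by tauto
    obtain ⟨de, hde, hx, hc⟩ := hrel'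
    rw [derivedEdges, Finset.mem_image] at hde
    obtain ⟨⟨e, t⟩, hmem, rfl⟩ := hde
    rw [Finset.mem_product] at hmem
    obtain ⟨ux, hux, hxe⟩ := Finset.mem_image.mp hx
    obtain ⟨uc, huc, hce⟩ := Finset.mem_image.mp hc
    subst hxe; subst hce
    refine ⟨SimpleGraph.Walk.cons (incAdj (e := ⟨e, hmem.1⟩) hux)
      (SimpleGraph.Walk.cons (incAdj (e := ⟨e, hmem.1⟩) huc).symm W'), ?_⟩
    rw [walkVoltage_cons, walkVoltage_cons]
    simp only [incVolt, Equiv.Perm.mul_apply] at hW' ⊢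
    rw [← hW']
    simp

omit [DecidableEq V] in
lemma inl_reachable (hconn : (hypAdj E).Connected) (u v : V) :
    Nonempty ((incGraph E).Walk (Sum.inl u) (Sum.inl v)) := by
  obtain ⟨W⟩ := hconn.preconnected u v
  induction W with
  | nil => exact ⟨SimpleGraph.Walk.nil⟩
  | cons h w ih =>
    rename_i a b c
    obtain ⟨W'⟩ := ih
    rw [hypAdj, SimpleGraph.fromRel_adj] at h
    obtain ⟨hne, hrel⟩ := h
    have : ∃ e ∈ E, a ∈ e ∧ b ∈ e := by tauto
    obtain ⟨e, he, h1, h2⟩ := this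
    exact ⟨SimpleGraph.Walk.cons (incAdj (e := ⟨e, he⟩) h1)
      (SimpleGraph.Walk.cons (incAdj (e := ⟨e, he⟩) h2).symm W')⟩

end Aux

theorem stmt_9 {V : Type*} [Fintype V] [DecidableEq V] {m k : ℕ} (hm : 2 ≤ m) (hk : 0 < k)
    (E : Finset (Finset V)) (hunif : ∀ e ∈ E, e.card = m)
    (hconn : (hypAdj E).Connected)
    (φ : V → Finset V → Equiv.Perm (Fin k)) :
    (hypAdj (derivedEdges E φ)).Connected ↔
      ∃ a : V ⊕ {e // e ∈ E}, ∀ i j : Fin k,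
        ∃ W : (incGraph E).Walk a a, i = walkVoltage (incVolt E φ) W j := by
  constructor
  · intro h
    obtain ⟨v⟩ := hconn.nonempty
    refine ⟨Sum.inl v, fun i j => ?_⟩
    exact reach_to_walk φ (h.preconnected (v, i) (v, j))
  · rintro ⟨a, ha⟩
    have key : ∃ v₀ : V, ∀ i j : Fin k, ∃ W : (incGraph E).Walk (Sum.inl v₀) (Sum.inl v₀),
        i = walkVoltage (incVolt E φ) W j := by
      cases a with
      | inl v₀ => exact ⟨v₀, ha⟩
      | inr e =>
        have hcard := hunif e.1 e.2
        have hne : e.1.Nonempty := Finset.card_pos.mp (by omega)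
        obtain ⟨v₀, hv₀⟩ := hne
        refine ⟨v₀, fun i j => ?_⟩
        obtain ⟨W, hW⟩ := ha ((φ v₀ e.1)⁻¹ i) ((φ v₀ e.1)⁻¹ j)
        refine ⟨SimpleGraph.Walk.cons (incAdj hv₀)
          (W.append (SimpleGraph.Walk.cons (incAdj hv₀).symm SimpleGraph.Walk.nil)), ?_⟩
        rw [walkVoltage_cons, walkVoltage_append, walkVoltage_cons, walkVoltage_nil]
        simp only [incVolt, mul_one, Equiv.Perm.mul_apply, ← hW]
        simp
    obtain ⟨v₀, hv₀⟩ := key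
    rw [SimpleGraph.connected_iff]
    constructor
    · rintro ⟨u, i⟩ ⟨v, j⟩
      obtain ⟨W1⟩ := inl_reachable hconn u v₀
      obtain ⟨W3⟩ := inl_reachable hconn v₀ v
      obtain ⟨W2, hW2⟩ := hv₀ ((walkVoltage (incVolt E φ) W1)⁻¹ i)
        (walkVoltage (incVolt E φ) W3 j)
      have hv : i = walkVoltage (incVolt E φ) (W1.append (W2.append W3)) j := by
        rw [walkVoltage_append, walkVoltage_append]
        simp only [Equiv.Perm.mul_apply, ← hW2]
        simp
      refine lift_walk φ (W1.append (W2.append W3)) j (u, i) (v, j) ?_ rfl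
      show (u, i) = (u, _)
      rw [← hv]
    · obtain ⟨v⟩ := hconn.nonempty
      exact ⟨(v, ⟨0, hk⟩)⟩
end

section
/- Let m be odd, let H be a connected m-uniform hypergraph on a finite vertex set V with edge set E, fix a base vertex v₁ ∈ V, and let H_B^φ be a connected 2-fold covering of H derived from a permutation voltage assignment φ in S_2 on the incidence graph B_H. Then s(H_B^φ) = s(H) · |{x : V → ℤ_m : Z(H,φ)x = 0 over ℤ_m}|, i.e., the cardinality of PS₀(H_B^φ) equals the cardinality of PS₀(H) times the number of solutions x : V → ℤ_m of the system Σ_{v ∈ e} sgn(φ(v,e))·x(v) = 0 in ℤ_m for all e ∈ E. -/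
open SimpleGraph Finset

/-- `PS₀(G)` for an `m`-uniform hypergraph with edge set `F` and base vertex `w₁`:
the set of `x : V(G) → ℤ_m` with `Z(G)x = 0` over `ℤ_m` and `x(w₁) = 0`. -/
def PS0 {W : Type*} (m : ℕ) (F : Finset (Finset W)) (w₁ : W) : Set (W → ZMod m) :=
  {x | (∀ e ∈ F, ∑ v ∈ e, x v = 0) ∧ x w₁ = 0}

/-- The full kernel (no base-point condition). -/
def Ker (m : ℕ) {W : Type*} (F : Finset (Finset W)) : Set (W → ZMod m) :=
  {x | ∀ e ∈ F, ∑ v ∈ e, x v = 0}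

lemma perm2_cases : ∀ σ : Equiv.Perm (Fin 2), σ = 1 ∨ (σ 0 = 1 ∧ σ 1 = 0) := by decide

lemma perm2_apply0 : ∀ σ : Equiv.Perm (Fin 2), (σ 0 = 0 ↔ σ = 1) := by decide

lemma perm2_apply1 : ∀ σ : Equiv.Perm (Fin 2), (σ 1 = 0 ↔ ¬ σ = 1) := by decide

lemma perm_pair_add {m : ℕ} (σ : Equiv.Perm (Fin 2)) (t : Fin 2 → ZMod m) :
    t (σ 0) + t (σ 1) = t 0 + t 1 := by
  rcases perm2_cases σ with h | ⟨h0, h1⟩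
  · simp [h]
  · rw [h0, h1, add_comm]

lemma perm_pair_sub {m : ℕ} (σ : Equiv.Perm (Fin 2)) (t : Fin 2 → ZMod m) :
    t (σ 0) - t (σ 1) = (if σ = 1 then (1 : ZMod m) else -1) * (t 0 - t 1) := by
  rcases perm2_cases σ with h | ⟨h0, h1⟩
  · simp [h]
  · have hne : σ ≠ 1 := by
      rintro rfl; exact absurd h0 (by decide)
    rw [if_neg hne, h0, h1]; ring

lemma sum_image_fst {V : Type*} [DecidableEq V] {α : Type*} [AddCommMonoid α]
    (e : Finset V) (g : V → Fin 2) (y : V × Fin 2 → α) :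
    ∑ p ∈ e.image (fun u => (u, g u)), y p = ∑ u ∈ e, y (u, g u) :=
  Finset.sum_image (fun a _ b _ h => congrArg Prod.fst h)

lemma mem_ker_add_const {W : Type*} {m : ℕ} {F : Finset (Finset W)}
    (hunif : ∀ e ∈ F, e.card = m) {x : W → ZMod m} (c : ZMod m)
    (hx : x ∈ Ker m F) : (fun v => x v + c) ∈ Ker m F := by
  intro e he
  rw [Finset.sum_add_distrib, hx e he, Finset.sum_const, hunif e he, zero_add,
    nsmul_eq_mul, ZMod.natCast_self, zero_mul]

lemma card_ker_eq {W : Type*} (m : ℕ) (F : Finset (Finset W))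
    (hunif : ∀ e ∈ F, e.card = m) (w₁ : W) :
    Nat.card (Ker m F) = Nat.card (PS0 m F w₁) * m := by
  have eqv : Ker m F ≃ (PS0 m F w₁) × ZMod m :=
    { toFun := fun x =>
        (⟨fun v => x.1 v - x.1 w₁,
          ⟨fun e he => by
            simpa [sub_eq_add_neg] using mem_ker_add_const hunif (-(x.1 w₁)) x.2 e he,
           by simp⟩⟩, x.1 w₁)
      invFun := fun p => ⟨fun v => p.1.1 v + p.2, mem_ker_add_const hunif p.2 p.1.2.1⟩
      left_inv := fun x => by
        apply Subtype.ext; funext v; simp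
      right_inv := fun p => by
        refine Prod.ext (Subtype.ext (funext fun v => ?_)) ?_ <;> simp [p.1.2.2] }
  rw [Nat.card_congr eqv, Nat.card_prod, Nat.card_zmod]

theorem stmt_19 {V : Type*} [Fintype V] [DecidableEq V] {m : ℕ}
    (hm : 2 ≤ m) (hmodd : Odd m)
    (E : Finset (Finset V)) (hunif : ∀ e ∈ E, e.card = m)
    (hconn : (hypAdj E).Connected) (v₁ : V)
    (φ : V → Finset V → Equiv.Perm (Fin 2))
    (hconn' : (hypAdj (derivedEdges E φ)).Connected) :
    Nat.card ↥(PS0 m (derivedEdges E φ) (v₁, 0)) =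
      Nat.card ↥(PS0 m E v₁) *
        Nat.card ↥{x : V → ZMod m |
          ∀ e ∈ E, ∑ v ∈ e, (if φ v e = 1 then (1 : ZMod m) else -1) * x v = 0} := by
  have hNZ : NeZero m := ⟨by omega⟩
  -- 2 is invertible in ZMod m
  obtain ⟨c, hc⟩ : ∃ c : ZMod m, 2 * c = 1 := by
    have hu : IsUnit (2 : ZMod m) := by
      have := (ZMod.isUnit_iff_coprime 2 m).mpr (Nat.coprime_two_left.mpr hmodd)
      simpa using this
    exact hu.exists_right_inv
  -- membership facts about derivedEdges
  have hmemD : ∀ e ∈ E, ∀ j : Fin 2,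
      e.image (fun u => (u, φ u e j)) ∈ derivedEdges E φ := fun e he j =>
    Finset.mem_image.mpr ⟨(e, j), Finset.mem_product.mpr ⟨he, Finset.mem_univ j⟩, rfl⟩
  have hmemD' : ∀ f ∈ derivedEdges E φ, ∃ e ∈ E, ∃ j : Fin 2,
      f = e.image (fun u => (u, φ u e j)) := by
    intro f hf
    obtain ⟨p, hp, rfl⟩ := Finset.mem_image.mp hf
    exact ⟨p.1, (Finset.mem_product.mp hp).1, p.2, rfl⟩
  -- the derived hypergraph is m-uniform
  have hunifD : ∀ f ∈ derivedEdges E φ, f.card = m := by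
    intro f hf
    obtain ⟨e, he, j, rfl⟩ := hmemD' f hf
    rw [Finset.card_image_of_injOn (fun a _ b _ h => congrArg Prod.fst h)]
    exact hunif e he
  set S : Set (V → ZMod m) :=
    {x : V → ZMod m |
      ∀ e ∈ E, ∑ v ∈ e, (if φ v e = 1 then (1 : ZMod m) else -1) * x v = 0} with hS
  -- the key bijection between the kernels
  have eqv : Ker m (derivedEdges E φ) ≃ (Ker m E) × S :=
    { toFun := fun y =>
        (⟨fun v => y.1 (v, 0) + y.1 (v, 1), by
          intro e he
          have h0 := y.2 _ (hmemD e he 0)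
          have h1 := y.2 _ (hmemD e he 1)
          rw [sum_image_fst] at h0 h1
          calc ∑ v ∈ e, (y.1 (v, 0) + y.1 (v, 1))
              = ∑ v ∈ e, (y.1 (v, φ v e 0) + y.1 (v, φ v e 1)) :=
                Finset.sum_congr rfl fun v _ =>
                  (perm_pair_add (φ v e) (fun j => y.1 (v, j))).symm
            _ = 0 := by rw [Finset.sum_add_distrib, h0, h1, add_zero]⟩,
         ⟨fun v => y.1 (v, 0) - y.1 (v, 1), by
          intro e he
          have h0 := y.2 _ (hmemD e he 0)
          have h1 := y.2 _ (hmemD e he 1)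
          rw [sum_image_fst] at h0 h1
          calc ∑ v ∈ e, (if φ v e = 1 then (1 : ZMod m) else -1) *
                  (y.1 (v, 0) - y.1 (v, 1))
              = ∑ v ∈ e, (y.1 (v, φ v e 0) - y.1 (v, φ v e 1)) :=
                Finset.sum_congr rfl fun v _ =>
                  (perm_pair_sub (φ v e) (fun j => y.1 (v, j))).symm
            _ = 0 := by rw [Finset.sum_sub_distrib, h0, h1, sub_zero]⟩)
      invFun := fun p =>
        ⟨fun q => c * (p.1.1 q.1 + (if q.2 = 0 then p.2.1 q.1 else -p.2.1 q.1)), by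
          intro f hf
          obtain ⟨e, he, j, rfl⟩ := hmemD' f hf
          rw [sum_image_fst]
          fin_cases j
          · show ∑ u ∈ e, c * ((p.1 : V → ZMod m) u +
              (if φ u e 0 = 0 then (p.2 : V → ZMod m) u else -(p.2 : V → ZMod m) u)) = 0
            have hpt : ∀ u ∈ e,
                c * (p.1.1 u + (if φ u e 0 = 0 then p.2.1 u else -p.2.1 u))
                  = c * p.1.1 u +
                    c * ((if φ u e = 1 then (1 : ZMod m) else -1) * p.2.1 u) := by
              intro u _
              by_cases h : φ u e = 1
              · rw [if_pos ((perm2_apply0 (φ u e)).mpr h), if_pos h]; ring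
              · rw [if_neg (fun h' => h ((perm2_apply0 (φ u e)).mp h')), if_neg h]; ring
            rw [Finset.sum_congr rfl hpt, Finset.sum_add_distrib, ← Finset.mul_sum,
              ← Finset.mul_sum, p.1.2 e he, p.2.2 e he, mul_zero, add_zero]
          · show ∑ u ∈ e, c * ((p.1 : V → ZMod m) u +
              (if φ u e 1 = 0 then (p.2 : V → ZMod m) u else -(p.2 : V → ZMod m) u)) = 0
            have hpt : ∀ u ∈ e,
                c * (p.1.1 u + (if φ u e 1 = 0 then p.2.1 u else -p.2.1 u))
                  = c * p.1.1 u -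
                    c * ((if φ u e = 1 then (1 : ZMod m) else -1) * p.2.1 u) := by
              intro u _
              by_cases h : φ u e = 1
              · rw [if_neg (fun h' => (perm2_apply1 (φ u e)).mp h' h), if_pos h]; ring
              · rw [if_pos ((perm2_apply1 (φ u e)).mpr h), if_neg h]; ring
            rw [Finset.sum_congr rfl hpt, Finset.sum_sub_distrib, ← Finset.mul_sum,
              ← Finset.mul_sum, p.1.2 e he, p.2.2 e he, mul_zero, sub_zero]⟩
      left_inv := fun y => by
        apply Subtype.ext; funext q
        obtain ⟨v, j⟩ := q
        fin_cases j
        · show c * ((y.1 (v, 0) + y.1 (v, 1)) +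
            (if (0 : Fin 2) = 0 then y.1 (v, 0) - y.1 (v, 1)
             else -(y.1 (v, 0) - y.1 (v, 1)))) = y.1 (v, 0)
          rw [if_pos rfl]
          linear_combination y.1 (v, 0) * hc
        · show c * ((y.1 (v, 0) + y.1 (v, 1)) +
            (if (1 : Fin 2) = 0 then y.1 (v, 0) - y.1 (v, 1)
             else -(y.1 (v, 0) - y.1 (v, 1)))) = y.1 (v, 1)
          rw [if_neg (by decide)]
          linear_combination y.1 (v, 1) * hc
      right_inv := fun p => by
        refine Prod.ext (Subtype.ext (funext fun v => ?_)) (Subtype.ext (funext fun v => ?_))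
        · show c * (p.1.1 v + (if (0 : Fin 2) = 0 then p.2.1 v else -p.2.1 v)) +
            c * (p.1.1 v + (if (1 : Fin 2) = 0 then p.2.1 v else -p.2.1 v)) = p.1.1 v
          rw [if_pos rfl, if_neg (by decide)]
          linear_combination p.1.1 v * hc
        · show c * (p.1.1 v + (if (0 : Fin 2) = 0 then p.2.1 v else -p.2.1 v)) -
            c * (p.1.1 v + (if (1 : Fin 2) = 0 then p.2.1 v else -p.2.1 v)) = p.2.1 v
          rw [if_pos rfl, if_neg (by decide)]
          linear_combination p.2.1 v * hc }
  have B : Nat.card (Ker m (derivedEdges E φ)) = Nat.card (Ker m E) * Nat.card S := by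
    rw [Nat.card_congr eqv, Nat.card_prod]
  have A1 := card_ker_eq m (derivedEdges E φ) hunifD (v₁, 0)
  have A2 := card_ker_eq m E hunif v₁
  have key : Nat.card (PS0 m (derivedEdges E φ) (v₁, 0)) * m
      = (Nat.card (PS0 m E v₁) * Nat.card S) * m := by
    rw [← A1, B, A2]; ring
  exact Nat.eq_of_mul_eq_mul_right (by omega) key
end
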